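/- arXiv:1307.1875 — 7 statements merged into one kernel-verified Lean document; each statement's English description precedes it below -/
import Mathlib

section
/- Let V be a finite-dimensional real inner product space equipped with an orthogonal complex structure J (i.e. J² = −id and ⟨Jx,Jy⟩ = ⟨x,y⟩), let W be a real vector space, and let h : V × V → W be a symmetric bilinear map satisfying h(Jx,Jy) = −h(x,y) for all x,y ∈ V. Then for every orthonormal basis e₁,…,e_n of V, Σᵢ h(eᵢ,eᵢ) = 0. -/
open scoped InnerProductSpace

/-- If `J` is an orthogonal complex structure on an inner product space `V` and the symmetric
bilinear map `h : V × V → W` satisfies `h(Jx, Jy) = -h(x, y)`, then the trace of `h` with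
respect to any orthonormal basis vanishes (a Kähler submanifold is minimal). -/
theorem stmt_2 {V : Type*} [NormedAddCommGroup V] [InnerProductSpace ℝ V]
    {W : Type*} [AddCommGroup W] [Module ℝ W]
    (J : V →ₗ[ℝ] V) (hJ2 : ∀ x : V, J (J x) = -x)
    (hJorth : ∀ x y : V, ⟪J x, J y⟫_ℝ = ⟪x, y⟫_ℝ)
    (h : V →ₗ[ℝ] V →ₗ[ℝ] W) (hsymm : ∀ x y : V, h x y = h y x)
    (hanti : ∀ x y : V, h (J x) (J y) = -h x y)
    {n : ℕ} (e : OrthonormalBasis (Fin n) ℝ V) :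
    ∑ i, h (e i) (e i) = 0 := by
  have hskew : ∀ x y : V, ⟪x, J y⟫_ℝ = -⟪J x, y⟫_ℝ := by
    intro x y
    have := hJorth x (J y)
    rw [hJ2 y, inner_neg_right] at this
    linarith
  have hite : ∀ j k : Fin n, ⟪e j, e k⟫_ℝ = if j = k then 1 else 0 :=
    orthonormal_iff_ite.mp e.orthonormal
  have expand : ∀ i, J (e i) = ∑ j, ⟪e j, J (e i)⟫_ℝ • e j :=
    fun i => (e.sum_repr' (J (e i))).symm
  have key : ∑ i, h (J (e i)) (J (e i)) = ∑ i, h (e i) (e i) := by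
    calc ∑ i, h (J (e i)) (J (e i))
        = ∑ i, ∑ j, ∑ k, (⟪e j, J (e i)⟫_ℝ * ⟪e k, J (e i)⟫_ℝ) • h (e j) (e k) := by
          refine Finset.sum_congr rfl fun i _ => ?_
          conv_lhs => rw [expand i]
          simp [map_sum, LinearMap.sum_apply, map_smul, LinearMap.smul_apply, smul_smul,
            Finset.smul_sum]
          rw [Finset.sum_comm]
          simp [mul_comm]
      _ = ∑ j, ∑ k, (∑ i, ⟪e j, J (e i)⟫_ℝ * ⟪e k, J (e i)⟫_ℝ) • h (e j) (e k) := by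
          rw [Finset.sum_comm]
          refine Finset.sum_congr rfl fun j _ => ?_
          rw [Finset.sum_comm]
          exact Finset.sum_congr rfl fun k _ => (Finset.sum_smul).symm
      _ = ∑ j, ∑ k, ⟪e j, e k⟫_ℝ • h (e j) (e k) := by
          refine Finset.sum_congr rfl fun j _ => Finset.sum_congr rfl fun k _ => ?_
          congr 1
          have h1 : ∀ i, ⟪e j, J (e i)⟫_ℝ * ⟪e k, J (e i)⟫_ℝ
              = ⟪J (e j), e i⟫_ℝ * ⟪e i, J (e k)⟫_ℝ := by
            intro i
            rw [hskew (e j) (e i), hskew (e k) (e i),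
              show ⟪e i, J (e k)⟫_ℝ = ⟪J (e k), e i⟫_ℝ from real_inner_comm _ _]
            ring
          rw [Finset.sum_congr rfl fun i _ => h1 i, e.sum_inner_mul_inner, hJorth]
      _ = ∑ i, h (e i) (e i) := by
          refine Finset.sum_congr rfl fun j _ => ?_
          rw [Finset.sum_eq_single j]
          · simp [hite]
          · intro k _ hk
            simp [hite, (Ne.symm hk : ¬ j = k)]
          · simp
  have hneg : ∑ i, h (e i) (e i) = -∑ i, h (e i) (e i) := by
    conv_lhs => rw [← key]
    simp [hanti]
  have h2 : (∑ i, h (e i) (e i)) + (∑ i, h (e i) (e i)) = 0 := by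
    nth_rewrite 1 [hneg]
    exact neg_add_cancel _
  calc ∑ i, h (e i) (e i)
      = ((1:ℝ)/2) • ((∑ i, h (e i) (e i)) + (∑ i, h (e i) (e i))) := by
        rw [← two_smul ℝ, smul_smul]; norm_num
    _ = 0 := by rw [h2, smul_zero]
end

section
/- Let V be a real inner product space with dim V = n ≥ 2 and let T : V × V × V → ℝ be a totally symmetric trilinear form. If there exists H ∈ V such that T(x,y,z) = ⟨x,y⟩⟨H,z⟩ for all x,y,z ∈ V, then H = 0. -/
open scoped InnerProductSpace

/-- If a totally symmetric trilinear form `T` on an inner product space of dimension `≥ 2` has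
the shape `T(x,y,z) = ⟨x,y⟩⟨H,z⟩`, then `H = 0` (no non-totally-geodesic totally umbilical
Lagrangian submanifolds). -/
theorem stmt_5 {V : Type*} [NormedAddCommGroup V] [InnerProductSpace ℝ V]
    [FiniteDimensional ℝ V] (hdim : 2 ≤ Module.finrank ℝ V)
    (T : V →ₗ[ℝ] V →ₗ[ℝ] V →ₗ[ℝ] ℝ)
    (hsymm₁ : ∀ x y z : V, T x y z = T y x z)
    (hsymm₂ : ∀ x y z : V, T x y z = T x z y)
    (H : V) (hT : ∀ x y z : V, T x y z = ⟪x, y⟫_ℝ * ⟪H, z⟫_ℝ) :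
    H = 0 := by
  by_contra hne
  -- find a nonzero vector orthogonal to H
  have hfin : Module.finrank ℝ (ℝ ∙ H) + Module.finrank ℝ (ℝ ∙ H)ᗮ
      = Module.finrank ℝ V := Submodule.finrank_add_finrank_orthogonal _
  have h1 : Module.finrank ℝ (ℝ ∙ H) = 1 := finrank_span_singleton hne
  have hpos : 0 < Module.finrank ℝ (ℝ ∙ H)ᗮ := by omega
  haveI : Nontrivial (ℝ ∙ H)ᗮ := Module.finrank_pos_iff.mp hpos
  obtain ⟨⟨e, he⟩, h0⟩ := exists_ne (0 : (ℝ ∙ H)ᗮ)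
  have he0 : e ≠ 0 := fun h => h0 (Subtype.ext h)
  have heH : ⟪e, H⟫_ℝ = 0 := by
    have := he H (Submodule.mem_span_singleton_self H)
    simpa [real_inner_comm] using this
  have h1 : T e e H = ⟪e, e⟫_ℝ * ⟪H, H⟫_ℝ := hT e e H
  have h2 : T e H e = ⟪e, H⟫_ℝ * ⟪H, e⟫_ℝ := hT e H e
  rw [← hsymm₂ e H e] at h1
  rw [h2, heH, zero_mul] at h1
  have hee : ⟪e, e⟫_ℝ ≠ 0 := fun h => he0 (inner_self_eq_zero.mp h)
  have hHH : ⟪H, H⟫_ℝ = 0 := by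
    rcases mul_eq_zero.mp h1.symm with h | h
    · exact absurd h hee
    · exact h
  exact hne (inner_self_eq_zero.mp hHH)
end

section
/- Let V be a real inner product space with dim V = n ≥ 2, let T : V × V × V → ℝ be a totally symmetric trilinear form, and fix an orthonormal basis e₁,…,e_n. Define H ∈ V by ⟨H,z⟩ = (1/n) Σᵢ T(eᵢ,eᵢ,z), and set S = Σ_{i,j,k} T(eᵢ,eⱼ,e_k)². Then S ≥ (3n²/(n+2)) ‖H‖², with equality if and only if T(x,y,z) = (n/(n+2)) (⟨x,y⟩⟨H,z⟩ + ⟨y,z⟩⟨H,x⟩ + ⟨z,x⟩⟨H,y⟩) for all x,y,z. -/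
open scoped InnerProductSpace

open Finset in
private def Pfun {n : ℕ} (c : ℝ) (f : Fin n → ℝ) (i j k : Fin n) : ℝ :=
  c * ((if i = j then (1:ℝ) else 0) * f k + (if j = k then (1:ℝ) else 0) * f i +
    (if k = i then (1:ℝ) else 0) * f j)

private lemma sum_mul_Pfun {n : ℕ} (c : ℝ) (f : Fin n → ℝ) (G : Fin n → Fin n → Fin n → ℝ) :
    ∑ i, ∑ j, ∑ k, G i j k * Pfun c f i j k
      = c * ((∑ i, ∑ k, G i i k * f k) + (∑ i, ∑ j, G i j j * f i)
          + (∑ j, ∑ k, G k j k * f j)) := by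
  have h1 : ∀ i j k : Fin n, G i j k * Pfun c f i j k
      = (if i = j then c * (G i j k * f k) else 0)
        + (if j = k then c * (G i j k * f i) else 0)
        + (if k = i then c * (G i j k * f j) else 0) := by
    intro i j k
    simp only [Pfun]
    split_ifs <;> ring
  have t1 : ∑ i, ∑ j, ∑ k, (if i = j then c * (G i j k * f k) else 0)
      = c * ∑ i, ∑ k, G i i k * f k := by
    rw [Finset.mul_sum]
    refine Finset.sum_congr rfl fun i _ => ?_
    rw [Finset.sum_comm]
    simp [Finset.mul_sum, Finset.sum_ite_eq, mul_assoc]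
  have t2 : ∑ i, ∑ j, ∑ k, (if j = k then c * (G i j k * f i) else 0)
      = c * ∑ i, ∑ j, G i j j * f i := by
    rw [Finset.mul_sum]
    refine Finset.sum_congr rfl fun i _ => ?_
    simp [Finset.mul_sum, Finset.sum_ite_eq, mul_assoc]
  have t3 : ∑ i, ∑ j, ∑ k, (if k = i then c * (G i j k * f j) else 0)
      = c * ∑ j, ∑ k, G k j k * f j := by
    rw [Finset.sum_comm]
    rw [Finset.mul_sum]
    refine Finset.sum_congr rfl fun j _ => ?_
    rw [Finset.sum_comm]
    simp [Finset.mul_sum, Finset.sum_ite_eq', mul_assoc]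
  simp only [h1, Finset.sum_add_distrib, t1, t2, t3]
  ring

private lemma sum_Pfun_iik {n : ℕ} (c : ℝ) (f : Fin n → ℝ) :
    ∑ i, ∑ k, Pfun c f i i k * f k = (c * (n + 2)) * ∑ k, f k ^ 2 := by
  rw [Finset.sum_comm, Finset.mul_sum]
  refine Finset.sum_congr rfl fun k _ => ?_
  have h : ∀ i, Pfun c f i i k * f k
      = c * (f k * f k) + ((if i = k then c * (f i * f k) else 0)
        + (if k = i then c * (f i * f k) else 0)) := by
    intro i
    simp only [Pfun, eq_self_iff_true, if_true]
    split_ifs <;> ring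
  rw [Finset.sum_congr rfl fun i _ => h i]
  simp [Finset.sum_add_distrib, Finset.sum_ite_eq, Finset.sum_ite_eq', Finset.card_univ]
  ring

private lemma sum_Pfun_ijj {n : ℕ} (c : ℝ) (f : Fin n → ℝ) :
    ∑ i, ∑ j, Pfun c f i j j * f i = (c * (n + 2)) * ∑ i, f i ^ 2 := by
  rw [Finset.mul_sum]
  refine Finset.sum_congr rfl fun i _ => ?_
  have h : ∀ j, Pfun c f i j j * f i
      = c * (f i * f i) + ((if i = j then c * (f j * f i) else 0)
        + (if j = i then c * (f j * f i) else 0)) := by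
    intro j
    simp only [Pfun, eq_self_iff_true, if_true]
    split_ifs <;> ring
  rw [Finset.sum_congr rfl fun j _ => h j]
  simp [Finset.sum_add_distrib, Finset.sum_ite_eq, Finset.sum_ite_eq', Finset.card_univ]
  ring

private lemma sum_Pfun_kjk {n : ℕ} (c : ℝ) (f : Fin n → ℝ) :
    ∑ j, ∑ k, Pfun c f k j k * f j = (c * (n + 2)) * ∑ j, f j ^ 2 := by
  rw [Finset.mul_sum]
  refine Finset.sum_congr rfl fun j _ => ?_
  have h : ∀ k, Pfun c f k j k * f j
      = c * (f j * f j) + ((if k = j then c * (f k * f j) else 0)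
        + (if j = k then c * (f k * f j) else 0)) := by
    intro k
    simp only [Pfun, eq_self_iff_true, if_true]
    split_ifs <;> ring
  rw [Finset.sum_congr rfl fun k _ => h k]
  simp [Finset.sum_add_distrib, Finset.sum_ite_eq, Finset.sum_ite_eq', Finset.card_univ]
  ring

private lemma core_identity {n : ℕ} (c : ℝ) (Tc : Fin n → Fin n → Fin n → ℝ) (f : Fin n → ℝ)
    (h1 : ∀ k, ∑ i, Tc i i k = n * f k)
    (h2 : ∀ i, ∑ j, Tc i j j = n * f i)
    (h3 : ∀ j, ∑ k, Tc k j k = n * f j) :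
    ∑ i, ∑ j, ∑ k, Tc i j k ^ 2
      = (∑ i, ∑ j, ∑ k, (Tc i j k - Pfun c f i j k) ^ 2)
        + (6 * c * n - 3 * c ^ 2 * (n + 2)) * ∑ k, f k ^ 2 := by
  have e1 : ∑ i, ∑ k, Tc i i k * f k = n * ∑ k, f k ^ 2 := by
    rw [Finset.sum_comm, Finset.mul_sum]
    refine Finset.sum_congr rfl fun k _ => ?_
    rw [← Finset.sum_mul, h1]; ring
  have e2 : ∑ i, ∑ j, Tc i j j * f i = n * ∑ i, f i ^ 2 := by
    rw [Finset.mul_sum]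
    refine Finset.sum_congr rfl fun i _ => ?_
    rw [← Finset.sum_mul, h2]; ring
  have e3 : ∑ j, ∑ k, Tc k j k * f j = n * ∑ j, f j ^ 2 := by
    rw [Finset.mul_sum]
    refine Finset.sum_congr rfl fun j _ => ?_
    rw [← Finset.sum_mul, h3]; ring
  have hTP : ∑ i, ∑ j, ∑ k, Tc i j k * Pfun c f i j k
      = (3 * c * n) * ∑ k, f k ^ 2 := by
    rw [sum_mul_Pfun, e1, e2, e3]; ring
  have hPP : ∑ i, ∑ j, ∑ k, Pfun c f i j k * Pfun c f i j k
      = (3 * c ^ 2 * (n + 2)) * ∑ k, f k ^ 2 := by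
    rw [sum_mul_Pfun, sum_Pfun_iik, sum_Pfun_ijj, sum_Pfun_kjk]; ring
  have expand : ∀ i j k : Fin n, (Tc i j k - Pfun c f i j k) ^ 2
      = Tc i j k ^ 2 - 2 * (Tc i j k * Pfun c f i j k)
        + Pfun c f i j k * Pfun c f i j k := by
    intro i j k; ring
  have hsplit : ∑ i, ∑ j, ∑ k, (Tc i j k - Pfun c f i j k) ^ 2
      = (∑ i, ∑ j, ∑ k, Tc i j k ^ 2)
        - 2 * (∑ i, ∑ j, ∑ k, Tc i j k * Pfun c f i j k)
        + (∑ i, ∑ j, ∑ k, Pfun c f i j k * Pfun c f i j k) := by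
    simp only [expand, Finset.sum_add_distrib, Finset.sum_sub_distrib, Finset.mul_sum]
  rw [hsplit, hTP, hPP]; ring

private lemma sum_weights_Pfun {n : ℕ} (c : ℝ) (f a b g : Fin n → ℝ) :
    ∑ i, ∑ j, ∑ k, a i * (b j * (g k * Pfun c f i j k))
      = c * ((∑ i, a i * b i) * (∑ k, g k * f k)
          + (∑ j, b j * g j) * (∑ i, a i * f i)
          + (∑ k, g k * a k) * (∑ j, b j * f j)) := by
  have h1 : ∀ i j k : Fin n, a i * (b j * (g k * Pfun c f i j k))
      = (if i = j then c * (a i * b j * (g k * f k)) else 0)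
        + (if j = k then c * (a i * f i * (b j * g k)) else 0)
        + (if k = i then c * (g k * a i * (b j * f j)) else 0) := by
    intro i j k
    simp only [Pfun]
    split_ifs <;> ring
  have t1 : ∑ i, ∑ j, ∑ k, (if i = j then c * (a i * b j * (g k * f k)) else 0)
      = c * ((∑ i, a i * b i) * (∑ k, g k * f k)) := by
    rw [Finset.sum_mul_sum, Finset.mul_sum]
    refine Finset.sum_congr rfl fun i _ => ?_
    rw [Finset.sum_comm, Finset.mul_sum]
    refine Finset.sum_congr rfl fun k _ => ?_
    simp only [Finset.sum_ite_eq, Finset.mem_univ, if_true]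
    try ring
  have t2 : ∑ i, ∑ j, ∑ k, (if j = k then c * (a i * f i * (b j * g k)) else 0)
      = c * ((∑ j, b j * g j) * (∑ i, a i * f i)) := by
    rw [mul_comm (∑ j, b j * g j), Finset.sum_mul_sum, Finset.mul_sum]
    refine Finset.sum_congr rfl fun i _ => ?_
    rw [Finset.mul_sum]
    refine Finset.sum_congr rfl fun j _ => ?_
    simp only [Finset.sum_ite_eq, Finset.mem_univ, if_true]
    try ring
  have t3 : ∑ i, ∑ j, ∑ k, (if k = i then c * (g k * a i * (b j * f j)) else 0)
      = c * ((∑ k, g k * a k) * (∑ j, b j * f j)) := by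
    rw [Finset.sum_comm, mul_comm (∑ k, g k * a k), Finset.sum_mul_sum, Finset.mul_sum]
    refine Finset.sum_congr rfl fun j _ => ?_
    rw [Finset.sum_comm, Finset.mul_sum]
    refine Finset.sum_congr rfl fun k _ => ?_
    simp only [Finset.sum_ite_eq, Finset.mem_univ, if_true]
    try ring
  simp only [h1, Finset.sum_add_distrib, t1, t2, t3]
  ring

/-- For a totally symmetric trilinear form `T` (the cubic form of a Lagrangian submanifold),
with `H` defined by `⟨H,z⟩ = (1/n) ∑ᵢ T(eᵢ,eᵢ,z)` and `S = ∑ᵢⱼₖ T(eᵢ,eⱼ,eₖ)²`, one has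
`S ≥ (3n²/(n+2))‖H‖²`, with equality iff
`T(x,y,z) = (n/(n+2))(⟨x,y⟩⟨H,z⟩ + ⟨y,z⟩⟨H,x⟩ + ⟨z,x⟩⟨H,y⟩)`. -/
theorem stmt_6 {V : Type*} [NormedAddCommGroup V] [InnerProductSpace ℝ V]
    {n : ℕ} (hn : 2 ≤ n) (e : OrthonormalBasis (Fin n) ℝ V)
    (T : V →ₗ[ℝ] V →ₗ[ℝ] V →ₗ[ℝ] ℝ)
    (hsymm₁ : ∀ x y z : V, T x y z = T y x z)
    (hsymm₂ : ∀ x y z : V, T x y z = T x z y)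
    (H : V) (hH : ∀ z : V, ⟪H, z⟫_ℝ = (n : ℝ)⁻¹ * ∑ i, T (e i) (e i) z)
    (S : ℝ) (hS : S = ∑ i, ∑ j, ∑ k, (T (e i) (e j) (e k)) ^ 2) :
    S ≥ (3 * (n : ℝ) ^ 2 / ((n : ℝ) + 2)) * ‖H‖ ^ 2 ∧
      (S = (3 * (n : ℝ) ^ 2 / ((n : ℝ) + 2)) * ‖H‖ ^ 2 ↔
        ∀ x y z : V, T x y z = ((n : ℝ) / ((n : ℝ) + 2)) *
          (⟪x, y⟫_ℝ * ⟪H, z⟫_ℝ + ⟪y, z⟫_ℝ * ⟪H, x⟫_ℝ + ⟪z, x⟫_ℝ * ⟪H, y⟫_ℝ)) := by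
  have hn0 : (n : ℝ) ≠ 0 := Nat.cast_ne_zero.mpr (by omega)
  have hd0 : (n : ℝ) + 2 ≠ 0 := by positivity
  set c : ℝ := (n : ℝ) / ((n : ℝ) + 2) with hc_def
  set f : Fin n → ℝ := fun k => ⟪H, e k⟫_ℝ with hf_def
  have h1 : ∀ k, ∑ i, T (e i) (e i) (e k) = n * f k := by
    intro k
    have := hH (e k)
    simp only [hf_def]
    rw [this]
    field_simp
  have h2 : ∀ i, ∑ j, T (e i) (e j) (e j) = n * f i := by
    intro i
    calc ∑ j, T (e i) (e j) (e j) = ∑ j, T (e j) (e j) (e i) :=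
          Finset.sum_congr rfl fun j _ => by
            rw [hsymm₁ (e i) (e j) (e j), hsymm₂ (e j) (e i) (e j)]
      _ = n * f i := h1 i
  have h3 : ∀ j, ∑ k, T (e k) (e j) (e k) = n * f j := by
    intro j
    calc ∑ k, T (e k) (e j) (e k) = ∑ k, T (e k) (e k) (e j) :=
          Finset.sum_congr rfl fun k _ => by rw [hsymm₂ (e k) (e j) (e k)]
      _ = n * f j := h1 j
  have hnorm : ‖H‖ ^ 2 = ∑ k, f k ^ 2 := by
    have hpar := e.sum_inner_mul_inner H H
    rw [← real_inner_self_eq_norm_sq, ← hpar]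
    refine Finset.sum_congr rfl fun k _ => ?_
    simp [hf_def, sq, real_inner_comm]
  have hcoef : 6 * c * (n : ℝ) - 3 * c ^ 2 * ((n : ℝ) + 2) = 3 * (n : ℝ) ^ 2 / ((n : ℝ) + 2) := by
    rw [hc_def]; field_simp; ring
  have hkey : S = (∑ i, ∑ j, ∑ k, (T (e i) (e j) (e k) - Pfun c f i j k) ^ 2)
      + 3 * (n : ℝ) ^ 2 / ((n : ℝ) + 2) * ‖H‖ ^ 2 := by
    rw [hS, hnorm, ← hcoef]
    exact core_identity c (fun i j k => T (e i) (e j) (e k)) f h1 h2 h3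
  have hnn : (0:ℝ) ≤ ∑ i, ∑ j, ∑ k, (T (e i) (e j) (e k) - Pfun c f i j k) ^ 2 :=
    Finset.sum_nonneg fun i _ => Finset.sum_nonneg fun j _ =>
      Finset.sum_nonneg fun k _ => sq_nonneg _
  constructor
  · linarith [hkey, hnn]
  constructor
  · intro heq
    have hQ0 : ∑ i, ∑ j, ∑ k, (T (e i) (e j) (e k) - Pfun c f i j k) ^ 2 = 0 := by
      linarith [hkey]
    have hzero : ∀ i j k, T (e i) (e j) (e k) = Pfun c f i j k := by
      intro i j k
      have r1 := (Finset.sum_eq_zero_iff_of_nonneg (fun i _ =>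
        Finset.sum_nonneg fun j _ => Finset.sum_nonneg fun k _ => sq_nonneg
          (T (e i) (e j) (e k) - Pfun c f i j k))).mp hQ0 i (Finset.mem_univ i)
      have r2 := (Finset.sum_eq_zero_iff_of_nonneg (fun j _ =>
        Finset.sum_nonneg fun k _ => sq_nonneg
          (T (e i) (e j) (e k) - Pfun c f i j k))).mp r1 j (Finset.mem_univ j)
      have r3 := (Finset.sum_eq_zero_iff_of_nonneg (fun k _ => sq_nonneg
          (T (e i) (e j) (e k) - Pfun c f i j k))).mp r2 k (Finset.mem_univ k)
      have := pow_eq_zero_iff (n := 2) (by norm_num) |>.mp r3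
      linarith [this]
    intro x y z
    have hexp : T x y z = ∑ i, ∑ j, ∑ k,
        ⟪e i, x⟫_ℝ * (⟪e j, y⟫_ℝ * (⟪e k, z⟫_ℝ * T (e i) (e j) (e k))) := by
      have triple : ∀ (A : Fin n → Fin n → Fin n → ℝ),
          ∑ k, ∑ j, ∑ i, A i j k = ∑ i, ∑ j, ∑ k, A i j k := by
        intro A
        calc ∑ k, ∑ j, ∑ i, A i j k = ∑ j, ∑ k, ∑ i, A i j k := Finset.sum_comm
          _ = ∑ j, ∑ i, ∑ k, A i j k := Finset.sum_congr rfl fun j _ => Finset.sum_comm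
          _ = ∑ i, ∑ j, ∑ k, A i j k := Finset.sum_comm
      conv_lhs => rw [← e.sum_repr x, ← e.sum_repr y, ← e.sum_repr z]
      simp only [map_sum, map_smul, LinearMap.sum_apply, LinearMap.smul_apply,
        smul_eq_mul, OrthonormalBasis.repr_apply_apply, Finset.mul_sum]
      rw [triple]
      refine Finset.sum_congr rfl fun i _ => Finset.sum_congr rfl fun j _ =>
        Finset.sum_congr rfl fun k _ => by ring
    rw [hexp]
    have hsub : ∀ i j k : Fin n,
        ⟪e i, x⟫_ℝ * (⟪e j, y⟫_ℝ * (⟪e k, z⟫_ℝ * T (e i) (e j) (e k)))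
          = ⟪e i, x⟫_ℝ * (⟪e j, y⟫_ℝ * (⟪e k, z⟫_ℝ * Pfun c f i j k)) := by
      intro i j k; rw [hzero]
    simp only [hsub]
    rw [sum_weights_Pfun c f (fun i => ⟪e i, x⟫_ℝ) (fun j => ⟪e j, y⟫_ℝ) (fun k => ⟪e k, z⟫_ℝ)]
    have pxy : ∑ i, ⟪e i, x⟫_ℝ * ⟪e i, y⟫_ℝ = ⟪x, y⟫_ℝ := by
      rw [← e.sum_inner_mul_inner x y]
      exact Finset.sum_congr rfl fun i _ => by rw [real_inner_comm (e i) x]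
    have pyz : ∑ j, ⟪e j, y⟫_ℝ * ⟪e j, z⟫_ℝ = ⟪y, z⟫_ℝ := by
      rw [← e.sum_inner_mul_inner y z]
      exact Finset.sum_congr rfl fun i _ => by rw [real_inner_comm (e i) y]
    have pzx : ∑ k, ⟪e k, z⟫_ℝ * ⟪e k, x⟫_ℝ = ⟪z, x⟫_ℝ := by
      rw [← e.sum_inner_mul_inner z x]
      exact Finset.sum_congr rfl fun i _ => by rw [real_inner_comm (e i) z]
    have pHz : ∑ k, ⟪e k, z⟫_ℝ * f k = ⟪H, z⟫_ℝ := by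
      rw [← e.sum_inner_mul_inner H z]
      exact Finset.sum_congr rfl fun k _ => by rw [hf_def]; ring
    have pHx : ∑ i, ⟪e i, x⟫_ℝ * f i = ⟪H, x⟫_ℝ := by
      rw [← e.sum_inner_mul_inner H x]
      exact Finset.sum_congr rfl fun k _ => by rw [hf_def]; ring
    have pHy : ∑ j, ⟪e j, y⟫_ℝ * f j = ⟪H, y⟫_ℝ := by
      rw [← e.sum_inner_mul_inner H y]
      exact Finset.sum_congr rfl fun k _ => by rw [hf_def]; ring
    rw [pxy, pyz, pzx, pHz, pHx, pHy]
  · intro hfor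
    have hortho := orthonormal_iff_ite.mp e.orthonormal
    have hzero : ∀ i j k, T (e i) (e j) (e k) = Pfun c f i j k := by
      intro i j k
      rw [hfor (e i) (e j) (e k)]
      simp only [Pfun, hortho, hf_def]
    have hQ0 : ∑ i, ∑ j, ∑ k, (T (e i) (e j) (e k) - Pfun c f i j k) ^ 2 = 0 :=
      Finset.sum_eq_zero fun i _ => Finset.sum_eq_zero fun j _ =>
        Finset.sum_eq_zero fun k _ => by rw [hzero]; ring
    linarith [hkey]
end

section
/- Let V be a finite-dimensional real inner product space, λ ≥ 0 a real number, and T : V → V a skew-adjoint linear endomorphism (⟨Tx, y⟩ = −⟨x, Ty⟩) satisfying ‖Tx‖ = λ‖x‖ for all x ∈ V. Then T² = −λ²·id_V. -/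
open scoped InnerProductSpace

/-- A skew-adjoint endomorphism `T` of a finite-dimensional real inner product space with
`‖Tx‖ = λ‖x‖` for all `x` satisfies `T² = -λ² id` (characterization of slant submanifolds). -/
theorem stmt_7 {V : Type*} [NormedAddCommGroup V] [InnerProductSpace ℝ V]
    [FiniteDimensional ℝ V] (lam : ℝ) (hlam : 0 ≤ lam) (T : V →ₗ[ℝ] V)
    (hskew : ∀ x y : V, ⟪T x, y⟫_ℝ = -⟪x, T y⟫_ℝ)
    (hnorm : ∀ x : V, ‖T x‖ = lam * ‖x‖) :
    T ∘ₗ T = -(lam ^ 2) • (LinearMap.id : V →ₗ[ℝ] V) := by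
  have hdiag : ∀ z : V, ⟪T z, T z⟫_ℝ = lam ^ 2 * ⟪z, z⟫_ℝ := by
    intro z
    rw [real_inner_self_eq_norm_sq, real_inner_self_eq_norm_sq, hnorm]
    ring
  have hkey : ∀ x y : V, ⟪T x, T y⟫_ℝ = lam ^ 2 * ⟪x, y⟫_ℝ := by
    intro x y
    have h := hdiag (x + y)
    rw [map_add, inner_add_add_self, inner_add_add_self, hdiag x, hdiag y] at h
    rw [real_inner_comm (T x) (T y)] at h
    have := real_inner_comm x y
    nlinarith [h]
  ext x
  apply ext_inner_right ℝ
  intro y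
  simp only [LinearMap.comp_apply, LinearMap.neg_apply, LinearMap.smul_apply,
    LinearMap.id_coe, id_eq, LinearMap.coe_comp, Function.comp_apply]
  rw [hskew, real_inner_smul_left, hkey]
  ring
end

section
/- Let g ≥ 2 be an integer and θ ∈ ℝ be such that sin(θ + (k−1)π/g) ≠ 0 for k = 1,…,g, and set λ_k = cot(θ + (k−1)π/g). Then λ₁,…,λ_g are pairwise distinct and for every i ∈ {1,…,g}: Σ_{j ≠ i} (1 + λᵢλⱼ)/(λᵢ − λⱼ) = 0. -/
private lemma mysub (a b : ℝ) (ha : Real.sin a ≠ 0) (hb : Real.sin b ≠ 0) :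
    Real.cot a - Real.cot b = Real.sin (b - a) / (Real.sin a * Real.sin b) := by
  rw [Real.cot_eq_cos_div_sin, Real.cot_eq_cos_div_sin, Real.sin_sub]
  field_simp

private lemma myfrac (a b : ℝ) (ha : Real.sin a ≠ 0) (hb : Real.sin b ≠ 0) :
    (1 + Real.cot a * Real.cot b) / (Real.cot a - Real.cot b)
      = Real.cos (a - b) / Real.sin (b - a) := by
  have k1 := mysub a b ha hb
  have k2 : 1 + Real.cot a * Real.cot b = Real.cos (a - b) / (Real.sin a * Real.sin b) := by
    rw [Real.cot_eq_cos_div_sin, Real.cot_eq_cos_div_sin, Real.cos_sub]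
    field_simp; ring
  rw [k1, k2]
  rcases eq_or_ne (Real.sin (b - a)) 0 with h | h
  · simp [h]
  · have hs : Real.sin a * Real.sin b ≠ 0 := mul_ne_zero ha hb
    field_simp

private lemma mysin_ne (g : ℕ) (hg : 0 < g) (a : ℤ) (ha : a ≠ 0) (hlt : a.natAbs < g) :
    Real.sin ((a : ℝ) * Real.pi / g) ≠ 0 := by
  intro h
  rw [Real.sin_eq_zero_iff] at h
  obtain ⟨n, hn⟩ := h
  have hg' : (g : ℝ) ≠ 0 := Nat.cast_ne_zero.mpr hg.ne'
  have hπ := Real.pi_ne_zero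
  have h1 : ((n * g : ℤ) : ℝ) = (a : ℝ) := by
    push_cast
    field_simp at hn
    apply mul_right_cancel₀ hπ
    linear_combination Real.pi * hn
  have h2 : n * g = a := by exact_mod_cast h1
  have hn0 : n ≠ 0 := by rintro rfl; simp at h2; omega
  have : g ≤ a.natAbs := by
    rw [← h2, Int.natAbs_mul]
    calc g = 1 * g := (one_mul g).symm
    _ ≤ n.natAbs * g := Nat.mul_le_mul_right _ (by omega)
    _ = n.natAbs * (g:ℤ).natAbs := by simp
  omega

/-- Cartan's basic identity is satisfied (with `c = 1` and equal multiplicities) by the family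
`λ_k = cot(θ + (k-1)π/g)`, `k = 1, …, g` (here indexed by `k = 0, …, g-1`): the `λ_k` are
pairwise distinct and `∑_{j ≠ i} (1 + λᵢλⱼ)/(λᵢ - λⱼ) = 0` for each `i`. -/
theorem stmt_8 (g : ℕ) (hg : 2 ≤ g) (θ : ℝ)
    (hsin : ∀ k : Fin g, Real.sin (θ + ((k : ℕ) : ℝ) * Real.pi / g) ≠ 0)
    (lam : Fin g → ℝ)
    (hlam : ∀ k : Fin g, lam k = Real.cot (θ + ((k : ℕ) : ℝ) * Real.pi / g)) :
    (∀ i j : Fin g, i ≠ j → lam i ≠ lam j) ∧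
    (∀ i : Fin g,
      ∑ j ∈ Finset.univ.erase i, (1 + lam i * lam j) / (lam i - lam j) = 0) := by
  have hg0 : 0 < g := by omega
  set A : Fin g → ℝ := fun k => θ + ((k : ℕ) : ℝ) * Real.pi / g with hA
  have hAd : ∀ i j : Fin g, A j - A i = ((((j : ℕ) : ℤ) - ((i : ℕ) : ℤ) : ℤ) : ℝ) * Real.pi / g := by
    intro i j; simp only [hA]; push_cast; ring
  have hsd : ∀ i j : Fin g, i ≠ j → Real.sin (A j - A i) ≠ 0 := by
    intro i j hij
    rw [hAd]
    apply mysin_ne g hg0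
    · intro h
      apply hij; apply Fin.ext; omega
    · have h1 := i.isLt; have h2 := j.isLt; omega
  constructor
  · intro i j hij h
    have h0 : Real.sin (A j - A i) / (Real.sin (A i) * Real.sin (A j)) = 0 := by
      rw [← mysub _ _ (hsin i) (hsin j), ← hlam, ← hlam, h, sub_self]
    have hm : Real.sin (A i) * Real.sin (A j) ≠ 0 := mul_ne_zero (hsin i) (hsin j)
    exact hsd i j hij ((div_eq_zero_iff.mp h0).resolve_right hm)
  · intro i
    set σ : Fin g → Fin g :=
      fun j => ⟨(2 * (i : ℕ) + g - (j : ℕ)) % g, Nat.mod_lt _ hg0⟩ with hσdef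
    have hσval : ∀ j : Fin g, (((σ j : Fin g) : ℕ) + (j : ℕ)) % g = (2 * (i : ℕ)) % g := by
      intro j
      have hj := j.isLt
      simp only [hσdef]
      rw [Nat.mod_add_mod]
      have he : 2 * (i : ℕ) + g - (j : ℕ) + (j : ℕ) = 2 * (i : ℕ) + g := by omega
      rw [he, Nat.add_mod_right]
    have hterm : ∀ j : Fin g, (1 + lam i * lam j) / (lam i - lam j)
        = Real.cos (A i - A j) / Real.sin (A j - A i) := by
      intro j
      rw [hlam, hlam]
      exact myfrac (A i) (A j) (hsin i) (hsin j)
    have hgR : (g : ℝ) ≠ 0 := Nat.cast_ne_zero.mpr hg0.ne'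
    have hAσ : ∀ j : Fin g, ∃ m : ℤ,
        A (σ j) - A i = (A i - A j) + (m : ℝ) * Real.pi := by
      intro j
      have hmod : ((((σ j : Fin g) : ℕ) : ℤ) + ((j : ℕ) : ℤ)) % (g : ℤ)
          = (2 * ((i : ℕ) : ℤ)) % (g : ℤ) := by
        have h := congrArg (Nat.cast : ℕ → ℤ) (hσval j)
        push_cast at h
        convert h using 2
      obtain ⟨m', hm'⟩ := Int.ModEq.dvd (hmod : Int.ModEq (g : ℤ) _ _)
      obtain ⟨m, hm⟩ : ∃ m : ℤ, (((σ j : Fin g) : ℕ) : ℤ)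
          = 2 * ((i : ℕ) : ℤ) - ((j : ℕ) : ℤ) + m * g := by
        refine ⟨-m', ?_⟩
        have : (2 * ((i : ℕ) : ℤ)) - ((((σ j : Fin g) : ℕ) : ℤ) + ((j : ℕ) : ℤ))
            = (g : ℤ) * m' := hm'
        linarith
      refine ⟨m, ?_⟩
      have e1 := hAd i (σ j)
      have e2 := hAd j i
      rw [e1, e2, hm]
      push_cast
      field_simp
      ring
    apply Finset.sum_involution (fun j _ => σ j)
    · -- sum of pair is zero
      intro j hj
      rw [hterm, hterm]
      obtain ⟨m, hm⟩ := hAσ j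
      have h1 : A i - A (σ j) = -(A i - A j) + ((-m : ℤ) : ℝ) * Real.pi := by
        push_cast; linarith
      have h2 : A (σ j) - A i = (A i - A j) + ((m : ℤ) : ℝ) * Real.pi := by
        linarith
      have h3 : A j - A i = -(A i - A j) := by ring
      rw [h1, h2, h3, Real.cos_add_int_mul_pi, Real.sin_add_int_mul_pi,
        Real.sin_neg, Real.cos_neg]
      have hpow : ((-1 : ℝ) ^ (-m : ℤ)) = ((-1 : ℝ) ^ m) := by
        rw [zpow_neg, ← inv_zpow, inv_neg_one]
      rw [hpow]
      have hne : ((-1 : ℝ) ^ m) ≠ 0 := by positivity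
      rw [mul_div_mul_left _ _ hne]
      ring
    · -- nonzero term implies not fixed
      intro j hj hfne hcon
      apply hfne
      have hji : j ≠ i := Finset.ne_of_mem_erase hj
      have hmod : ((2 : ℤ) * ((j : ℕ) : ℤ)) % (g : ℤ) = (2 * ((i : ℕ) : ℤ)) % (g : ℤ) := by
        have h1 := hσval j
        rw [hcon] at h1
        rw [← two_mul] at h1
        have h2 : (2 * (j : ℕ)) % g = (2 * (i : ℕ)) % g := h1
        have h := congrArg (Nat.cast : ℕ → ℤ) h2
        push_cast at h
        exact h
      obtain ⟨m', hm'⟩ := Int.ModEq.dvd (hmod : Int.ModEq (g : ℤ) _ _)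
      obtain ⟨m, hm⟩ : ∃ m : ℤ, 2 * (((i : ℕ) : ℤ) - ((j : ℕ) : ℤ)) = m * g := by
        refine ⟨m', ?_⟩
        have : (2 * ((i : ℕ) : ℤ)) - (2 * ((j : ℕ) : ℤ)) = (g : ℤ) * m' := hm'
        linarith
      have hmne : m ≠ 0 := by
        rintro rfl
        simp only [zero_mul] at hm
        exact hji (Fin.ext (by omega))
      have hi := i.isLt; have hj' := j.isLt
      have hm1 : m.natAbs = 1 := by
        have hlt : (2 * (((i : ℕ) : ℤ) - ((j : ℕ) : ℤ))).natAbs < 2 * g := by omega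
        rw [hm, Int.natAbs_mul] at hlt
        simp only [Int.natAbs_natCast] at hlt
        have h0 : 0 < m.natAbs := Int.natAbs_pos.mpr hmne
        nlinarith [hlt, h0, hg0]
      rw [hterm]
      have hxval : A i - A j = ((m : ℝ) * Real.pi) / 2 := by
        simp only [hA]
        have hmr : 2 * (((i : ℕ) : ℝ) - ((j : ℕ) : ℝ)) = (m : ℝ) * g := by
          have h := congrArg (fun z : ℤ => (z : ℝ)) hm
          push_cast at h
          linarith
        field_simp
        linear_combination Real.pi * hmr
      rw [hxval]
      rcases Int.natAbs_eq_iff.mp hm1 with h | h <;> rw [h] <;> push_cast <;>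
        norm_num [Real.cos_pi_div_two, neg_div, Real.cos_neg]
    · -- σ maps erase i to erase i
      intro j hj
      have hji : j ≠ i := Finset.ne_of_mem_erase hj
      refine Finset.mem_erase.mpr ⟨?_, Finset.mem_univ _⟩
      intro hcon
      have h1 := hσval j
      rw [hcon] at h1
      have k : Nat.ModEq g ((i : ℕ) + (j : ℕ)) ((i : ℕ) + (i : ℕ)) := by
        show _ % g = _ % g
        rw [h1, two_mul]
      have k' := Nat.ModEq.add_left_cancel' _ k
      apply hji; apply Fin.ext
      have hi := i.isLt; have hj' := j.isLt
      have k'' : (j : ℕ) % g = (i : ℕ) % g := k'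
      rwa [Nat.mod_eq_of_lt hj', Nat.mod_eq_of_lt hi] at k''
    · -- involution
      intro j hj
      have k : Nat.ModEq g (((σ (σ j) : Fin g) : ℕ) + ((σ j : Fin g) : ℕ))
          (((j : Fin g) : ℕ) + ((σ j : Fin g) : ℕ)) := by
        show _ % g = _ % g
        rw [hσval (σ j), add_comm ((j : Fin g) : ℕ), hσval j]
      have k' := Nat.ModEq.add_right_cancel' _ k
      have hs1 := (σ (σ j)).isLt
      have hj' := j.isLt
      apply Fin.ext
      have k'' : ((σ (σ j) : Fin g) : ℕ) % g = ((j : Fin g) : ℕ) % g := k'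
      rwa [Nat.mod_eq_of_lt hs1, Nat.mod_eq_of_lt hj'] at k''
end

section
/- Let γ : ℝ → ℝ³ be a smooth closed curve parametrized by arc length with period L > 0 (γ(s+L) = γ(s), ‖γ′(s)‖ = 1 for all s). Then the total curvature satisfies ∫₀ᴸ ‖γ″(s)‖ ds ≥ 2π. -/
open Real intervalIntegral
open scoped RealInnerProductSpace

section Aux
variable {E : Type*} [NormedAddCommGroup E] [InnerProductSpace ℝ E]

-- arccos antitone
lemma my_arccos_le_arccos {x y : ℝ} (hxy : x ≤ y) (hy : y ≤ 1) :
    arccos y ≤ arccos x := by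
  unfold Real.arccos
  have := Real.monotone_arcsin hxy
  linarith

-- triangle inequality for unit vectors
lemma angle_triangle_unit (x y z : E) (hx : ‖x‖ = 1) (hy : ‖y‖ = 1) (hz : ‖z‖ = 1) :
    arccos ⟪x, z⟫ ≤ arccos ⟪x, y⟫ + arccos ⟪y, z⟫ := by
  set p := ⟪x, y⟫ with hp
  set q := ⟪y, z⟫ with hq
  set r := ⟪x, z⟫ with hr
  have hpa : |p| ≤ 1 := by
    simpa [hx, hy] using abs_real_inner_le_norm x y
  have hqa : |q| ≤ 1 := by
    simpa [hy, hz] using abs_real_inner_le_norm y z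
  have hra : |r| ≤ 1 := by
    simpa [hx, hz] using abs_real_inner_le_norm x z
  have hp1 := abs_le.mp hpa
  have hq1 := abs_le.mp hqa
  have hr1 := abs_le.mp hra
  -- key inequality: r ≥ p*q - √(1-p²)√(1-q²)
  have hu : ‖x - p • y‖ = Real.sqrt (1 - p^2) := by
    rw [show (1 : ℝ) - p^2 = ‖x - p • y‖^2 by
      rw [norm_sub_sq_real]
      simp [inner_smul_right, norm_smul, hx, hy, hp, real_inner_comm]
      ring]
    rw [Real.sqrt_sq (norm_nonneg _)]
  have hw : ‖z - q • y‖ = Real.sqrt (1 - q^2) := by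
    rw [show (1 : ℝ) - q^2 = ‖z - q • y‖^2 by
      rw [norm_sub_sq_real]
      simp [inner_smul_right, norm_smul, hz, hy, hq, real_inner_comm]
      ring]
    rw [Real.sqrt_sq (norm_nonneg _)]
  have hinner : ⟪x - p • y, z - q • y⟫ = r - p * q := by
    rw [inner_sub_left, inner_sub_right, inner_sub_right, inner_smul_left,
      inner_smul_right, inner_smul_left, inner_smul_right,
      real_inner_self_eq_norm_sq, hy]
    simp only [starRingEnd_apply, star_trivial, ← hp, ← hq, ← hr]
    ring
  have hCS : |r - p * q| ≤ Real.sqrt (1 - p^2) * Real.sqrt (1 - q^2) := by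
    rw [← hu, ← hw, ← hinner]
    exact abs_real_inner_le_norm _ _
  have hkey : Real.cos (arccos p + arccos q) ≤ r := by
    rw [Real.cos_add, Real.cos_arccos hp1.1 hp1.2, Real.cos_arccos hq1.1 hq1.2,
      Real.sin_arccos, Real.sin_arccos]
    have := (abs_le.mp hCS).1
    linarith
  by_cases hsum : arccos p + arccos q ≤ π
  · have h1 : arccos r ≤ arccos (Real.cos (arccos p + arccos q)) :=
      my_arccos_le_arccos hkey hr1.2
    rwa [Real.arccos_cos (add_nonneg (Real.arccos_nonneg _) (Real.arccos_nonneg _)) hsum] at h1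
  · exact le_trans (Real.arccos_le_pi r) (le_of_not_ge hsum)

-- chord-to-angle: arccos ⟪x,y⟫ ≤ c + c³ where c = ‖x - y‖ ≤ 1
lemma arccos_inner_le_chord (x y : E) (hx : ‖x‖ = 1) (hy : ‖y‖ = 1)
    (h1 : ‖x - y‖ ≤ 1) :
    arccos ⟪x, y⟫ ≤ ‖x - y‖ + ‖x - y‖ ^ 3 := by
  set c := ‖x - y‖ with hc
  have hc0 : 0 ≤ c := norm_nonneg _
  have hinner : ⟪x, y⟫ = 1 - c ^ 2 / 2 := by
    have := norm_sub_sq_real x y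
    rw [hx, hy] at this
    rw [← hc] at this
    nlinarith [this]
  rcases eq_or_lt_of_le hc0 with hc0' | hc0'
  · -- c = 0
    rw [hinner, ← hc0']
    norm_num [Real.arccos_one]
  -- main case 0 < c ≤ 1
  have hpi : (3:ℝ) < π := Real.pi_gt_three
  have ht2 : c + c ^ 3 ≤ 2 := by nlinarith
  have hcos : Real.cos (c + c ^ 3) ≤ 1 - c ^ 2 / 2 := by
    set t := c + c ^ 3 with htdef
    have ht0 : 0 < t := by positivity
    have hsin : t / 2 - (t / 2) ^ 3 / 4 < Real.sin (t / 2) :=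
      lt_of_le_of_lt (by have := pow_nonneg (by positivity : (0:ℝ) ≤ t / 2) 3; linarith)
        (Real.sin_gt_sub_cube (by positivity : 0 < t / 2))
    have hcos2 : Real.cos t = 1 - 2 * Real.sin (t / 2) ^ 2 := by
      have := Real.sin_sq_eq_half_sub (t / 2)
      rw [show 2 * (t / 2) = t by ring] at this
      linarith
    rw [hcos2]
    -- need 2 * sin(t/2)^2 ≥ c^2/2, i.e., sin(t/2) ≥ c/2
    have hlow : c / 2 ≤ t / 2 - (t / 2) ^ 3 / 4 := by
      have hcube : (c + c ^ 3) ^ 3 ≤ (2 * c) ^ 3 :=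
        pow_le_pow_left₀ (by positivity) (by nlinarith) 3
      rw [htdef]
      nlinarith [hcube]
    have hs : c / 2 ≤ Real.sin (t / 2) := le_trans hlow (le_of_lt hsin)
    nlinarith [hs]
  have h2 : arccos ⟪x, y⟫ ≤ arccos (Real.cos (c + c ^ 3)) := by
    rw [hinner]
    exact my_arccos_le_arccos hcos (by nlinarith)
  rwa [Real.arccos_cos (by positivity) (by linarith)] at h2

variable [CompleteSpace E]

lemma arccos_chain (f : ℕ → E) (hf : ∀ i, ‖f i‖ = 1) (n : ℕ) :
    arccos ⟪f 0, f n⟫ ≤ ∑ i ∈ Finset.range n, arccos ⟪f i, f (i + 1)⟫ := by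
  induction n with
  | zero =>
    simp [show ⟪f 0, f 0⟫ = 1 by
      rw [real_inner_self_eq_norm_sq, hf 0]; norm_num, Real.arccos_one, hf]
  | succ n ih =>
    rw [Finset.sum_range_succ]
    exact le_trans (angle_triangle_unit (f 0) (f n) (f (n + 1)) (hf 0) (hf n) (hf (n + 1)))
      (by linarith)

/-- spherical distance between endpoints is at most the integral of the speed -/
lemma arccos_le_integral (T : ℝ → E) (hTd : Differentiable ℝ T)
    (hT'c : Continuous (deriv T)) (hunit : ∀ s, ‖T s‖ = 1)
    {a b : ℝ} (hab : a ≤ b) :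
    arccos ⟪T a, T b⟫ ≤ ∫ s in a..b, ‖deriv T s‖ := by
  set K := ∫ s in a..b, ‖deriv T s‖ with hK
  have hκc : Continuous fun s => ‖deriv T s‖ := hT'c.norm
  have hKnn : 0 ≤ K := intervalIntegral.integral_nonneg hab (fun s _ => norm_nonneg _)
  -- chord bound
  have chord : ∀ u v : ℝ, u ≤ v → ‖T v - T u‖ ≤ ∫ s in u..v, ‖deriv T s‖ := by
    intro u v huv
    have hftc : ∫ s in u..v, deriv T s = T v - T u :=
      intervalIntegral.integral_deriv_eq_sub (fun x _ => hTd x)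
        (hT'c.intervalIntegrable u v)
    rw [← hftc]
    exact intervalIntegral.norm_integral_le_integral_norm huv
  rcases eq_or_lt_of_le hab with rfl | hab'
  · simp [show ⟪T a, T a⟫ = 1 by
      rw [real_inner_self_eq_norm_sq, hunit a]; norm_num, Real.arccos_one, hKnn, hunit]
  -- bound on the speed
  obtain ⟨M, hM⟩ := (isCompact_Icc (a := a) (b := b)).exists_bound_of_continuousOn
    hκc.continuousOn
  simp only [norm_norm] at hM
  have hM0 : 0 ≤ M := le_trans (norm_nonneg _) (hM a (by constructor <;> linarith))
  refine le_of_forall_pos_le_add fun δ hδ => ?_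
  -- choose n
  set r := min 1 (δ / (K + 1)) with hr
  have hr0 : 0 < r := lt_min one_pos (div_pos hδ (by linarith))
  obtain ⟨n, hn⟩ := exists_nat_gt (M * (b - a) / r)
  have hba : 0 ≤ b - a := by linarith
  have hn0 : 0 < n := by
    have : (0:ℝ) ≤ M * (b - a) / r := div_nonneg (mul_nonneg hM0 hba) hr0.le
    exact_mod_cast lt_of_le_of_lt this hn
  have hnR : (0:ℝ) < n := by exact_mod_cast hn0
  set ε := M * (b - a) / n with hε
  have hεr : ε ≤ r := by
    rw [hε, div_le_iff₀ hnR]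
    rw [div_lt_iff₀ hr0] at hn
    nlinarith
  have hε1 : ε ≤ 1 := le_trans hεr (min_le_left _ _)
  have hε0 : 0 ≤ ε := div_nonneg (mul_nonneg hM0 hba) hnR.le
  -- partition
  set s : ℕ → ℝ := fun i => a + i * ((b - a) / n) with hs
  have hs0 : s 0 = a := by simp [hs]
  have hsn : s n = b := by
    simp only [hs]; field_simp [hnR.ne']
    ring
  have hsmono : ∀ i : ℕ, s i ≤ s (i + 1) := by
    intro i
    have : (0:ℝ) ≤ (b - a) / n := div_nonneg hba hnR.le
    simp only [hs]
    push_cast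
    nlinarith
  have hsIcc : ∀ i : ℕ, i ≤ n → s i ∈ Set.Icc a b := by
    intro i hi
    constructor
    · have : (0:ℝ) ≤ i * ((b - a) / n) := mul_nonneg (Nat.cast_nonneg i) (div_nonneg hba hnR.le)
      simp [hs]; linarith
    · simp only [hs]
      have hiR : (i:ℝ) ≤ n := by exact_mod_cast hi
      have : (i:ℝ) * ((b - a) / n) ≤ n * ((b - a) / n) := by
        apply mul_le_mul_of_nonneg_right hiR (div_nonneg hba hnR.le)
      have hnn : (n:ℝ) * ((b - a) / n) = b - a := by field_simp
      linarith [hnn ▸ this]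
  -- per-segment length
  set ℓ : ℕ → ℝ := fun i => ∫ x in s i..s (i + 1), ‖deriv T x‖ with hℓ
  have hℓnn : ∀ i, 0 ≤ ℓ i := fun i =>
    intervalIntegral.integral_nonneg (hsmono i) (fun x _ => norm_nonneg _)
  have hℓε : ∀ i : ℕ, i < n → ℓ i ≤ ε := by
    intro i hi
    have h1 : ℓ i ≤ ∫ _x in s i..s (i + 1), M := by
      apply intervalIntegral.integral_mono_on (hsmono i)
        (hκc.intervalIntegrable _ _) (intervalIntegrable_const)
      intro x hx
      exact hM x (Set.mem_of_mem_of_subset hx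
        (Set.Icc_subset_Icc (hsIcc i (le_of_lt hi)).1 (hsIcc (i+1) hi).2))
    rw [intervalIntegral.integral_const, smul_eq_mul] at h1
    have hlen : s (i + 1) - s i = (b - a) / n := by
      simp only [hs]; push_cast; ring
    rw [hlen] at h1
    calc ℓ i ≤ ((b - a) / n) • M := h1
      _ = ε := by rw [hε, smul_eq_mul]; ring
  -- total
  have hsum : ∑ i ∈ Finset.range n, ℓ i = K := by
    rw [hℓ, hK]
    rw [intervalIntegral.sum_integral_adjacent_intervals
      (fun k _ => hκc.intervalIntegrable _ _), hs0, hsn]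
  -- per-segment arccos bound
  have hseg : ∀ i : ℕ, i < n →
      arccos ⟪T (s i), T (s (i + 1))⟫ ≤ ℓ i * (1 + ε ^ 2) := by
    intro i hi
    have hch : ‖T (s (i+1)) - T (s i)‖ ≤ ℓ i := chord _ _ (hsmono i)
    have hc1 : ‖T (s i) - T (s (i+1))‖ ≤ ℓ i := by
      rwa [norm_sub_rev] at hch
    have hc2 : ‖T (s i) - T (s (i+1))‖ ≤ 1 := le_trans hc1 (le_trans (hℓε i hi) hε1)
    have := arccos_inner_le_chord (T (s i)) (T (s (i+1))) (hunit _) (hunit _) hc2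
    set c := ‖T (s i) - T (s (i+1))‖ with hc
    have hc0 : 0 ≤ c := norm_nonneg _
    have hℓiε : ℓ i ≤ ε := hℓε i hi
    have hcε : c ≤ ε := le_trans hc1 hℓiε
    have hcube : c ^ 3 ≤ ℓ i * ε ^ 2 := by
      have h2 : c ^ 2 ≤ ε ^ 2 := pow_le_pow_left₀ hc0 hcε 2
      calc c ^ 3 = c * c ^ 2 := by ring
        _ ≤ ℓ i * ε ^ 2 := mul_le_mul hc1 h2 (sq_nonneg c) (hℓnn i)
    calc arccos ⟪T (s i), T (s (i + 1))⟫ ≤ c + c ^ 3 := this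
      _ ≤ ℓ i + ℓ i * ε ^ 2 := by linarith
      _ = ℓ i * (1 + ε ^ 2) := by ring
  -- combine
  have hchain := arccos_chain (fun i => T (s i)) (fun i => hunit _) n
  have hsumle : ∑ i ∈ Finset.range n, arccos ⟪T (s i), T (s (i + 1))⟫ ≤ K * (1 + ε ^ 2) := by
    calc ∑ i ∈ Finset.range n, arccos ⟪T (s i), T (s (i + 1))⟫
        ≤ ∑ i ∈ Finset.range n, ℓ i * (1 + ε ^ 2) :=
          Finset.sum_le_sum fun i hi => hseg i (Finset.mem_range.mp hi)
      _ = (∑ i ∈ Finset.range n, ℓ i) * (1 + ε ^ 2) := by rw [← Finset.sum_mul]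
      _ = K * (1 + ε ^ 2) := by rw [hsum]
  have hfinal : K * (1 + ε ^ 2) ≤ K + δ := by
    have hεδ : ε ≤ δ / (K + 1) := le_trans hεr (min_le_right _ _)
    rw [le_div_iff₀ (by linarith : (0:ℝ) < K + 1)] at hεδ
    nlinarith [hKnn, hε0, hε1]
  calc arccos ⟪T a, T b⟫ = arccos ⟪T (s 0), T (s n)⟫ := by rw [hs0, hsn]
    _ ≤ ∑ i ∈ Finset.range n, arccos ⟪T (s i), T (s (i + 1))⟫ := hchain
    _ ≤ K * (1 + ε ^ 2) := hsumle
    _ ≤ K + δ := hfinal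

/-- a continuous function with zero integral on [0,L] has a zero -/
lemma exists_zero_of_integral_zero {h : ℝ → ℝ} (hc : Continuous h) {L : ℝ} (hL : 0 < L)
    (hint : ∫ s in (0:ℝ)..L, h s = 0) : ∃ s ∈ Set.Icc 0 L, h s = 0 := by
  by_contra hno
  push_neg at hno
  have dich : (∀ s ∈ Set.Icc (0:ℝ) L, 0 < h s) ∨ (∀ s ∈ Set.Icc (0:ℝ) L, h s < 0) := by
    by_contra hd
    push_neg at hd
    obtain ⟨⟨u, hu, hu'⟩, ⟨v, hv, hv'⟩⟩ := hd
    have hu2 : h u < 0 := lt_of_le_of_ne hu' (hno u hu)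
    have hv2 : 0 < h v := lt_of_le_of_ne hv' (Ne.symm (hno v hv))
    have : (0:ℝ) ∈ Set.uIcc (h u) (h v) := by
      rw [Set.mem_uIcc]; left; exact ⟨hu2.le, hv2.le⟩
    obtain ⟨w, hw, hw'⟩ := intermediate_value_uIcc (a := u) (b := v)
      hc.continuousOn this
    have hwIcc : w ∈ Set.Icc (0:ℝ) L := by
      rcases Set.mem_uIcc.mp hw with h1 | h1
      · exact ⟨le_trans hu.1 h1.1, le_trans h1.2 hv.2⟩
      · exact ⟨le_trans hv.1 h1.1, le_trans h1.2 hu.2⟩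
    exact hno w hwIcc hw'
  rcases dich with hpos | hneg
  · have : 0 < ∫ s in (0:ℝ)..L, h s :=
      intervalIntegral.intervalIntegral_pos_of_pos_on (hc.intervalIntegrable 0 L)
        (fun x hx => hpos x ⟨hx.1.le, hx.2.le⟩) hL
    linarith [hint ▸ this]
  · have : 0 < ∫ s in (0:ℝ)..L, -h s :=
      intervalIntegral.intervalIntegral_pos_of_pos_on ((hc.neg).intervalIntegrable 0 L)
        (fun x hx => neg_pos.mpr (hneg x ⟨hx.1.le, hx.2.le⟩)) hL
    rw [intervalIntegral.integral_neg, hint] at this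
    linarith

end Aux

/-- Fenchel's theorem: a smooth closed curve in `ℝ³`, parametrized by arc length with period
`L > 0`, has total curvature `∫₀ᴸ ‖γ''(s)‖ ds ≥ 2π`. -/
theorem stmt_12 (L : ℝ) (hL : 0 < L) (γ : ℝ → EuclideanSpace ℝ (Fin 3))
    (hsmooth : ContDiff ℝ (⊤ : ℕ∞) γ)
    (hper : ∀ s : ℝ, γ (s + L) = γ s)
    (hunit : ∀ s : ℝ, ‖deriv γ s‖ = 1) :
    2 * Real.pi ≤ ∫ s in (0 : ℝ)..L, ‖deriv (deriv γ) s‖ := by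
  set T := deriv γ with hT
  obtain ⟨hγd, hTsm⟩ := contDiff_infty_iff_deriv.mp hsmooth
  obtain ⟨hTd, hT'sm⟩ := contDiff_infty_iff_deriv.mp hTsm
  have hT'c : Continuous (deriv T) := hT'sm.continuous
  have hκc : Continuous fun s => ‖deriv T s‖ := hT'c.norm
  set κ := fun s => ‖deriv T s‖ with hκ
  set K := ∫ s in (0:ℝ)..L, κ s with hKdef
  have hKnn : 0 ≤ K := intervalIntegral.integral_nonneg hL.le (fun s _ => norm_nonneg _)
  -- periodicity of T
  have hTper : ∀ s, T (s + L) = T s := by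
    intro s
    have hfun : (fun t => γ (t + L)) = γ := funext hper
    calc T (s + L) = deriv (fun t => γ (t + L)) s := (deriv_comp_add_const γ L s).symm
      _ = T s := by rw [hfun]
  have hTL : T L = T 0 := by simpa using hTper 0
  -- for every m, ⟨T ·, m⟩ has a zero on [0, L]
  have hzero : ∀ m : EuclideanSpace ℝ (Fin 3), ∃ s ∈ Set.Icc (0:ℝ) L, ⟪T s, m⟫ = 0 := by
    intro m
    have hder : ∀ s : ℝ, HasDerivAt (fun t => ⟪γ t, m⟫) ⟪T s, m⟫ s := by
      intro s
      have h1 := (hγd s).hasDerivAt.inner ℝ (hasDerivAt_const s m)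
      simpa using h1
    have hintzero : ∫ s in (0:ℝ)..L, ⟪T s, m⟫ = 0 := by
      rw [intervalIntegral.integral_eq_sub_of_hasDerivAt (fun x _ => hder x)
        ((hTsm.continuous.inner continuous_const).intervalIntegrable 0 L)]
      have : γ L = γ 0 := by simpa using hper 0
      rw [this, sub_self]
    exact exists_zero_of_integral_zero (hTsm.continuous.inner continuous_const) hL hintzero
  -- choose b with ∫₀ᵇ κ = K/2
  have hFc : ContinuousOn (fun x => ∫ s in (0:ℝ)..x, κ s) (Set.Icc 0 L) := by
    have : ∀ x : ℝ, HasDerivAt (fun u => ∫ s in (0:ℝ)..u, κ s) (κ x) x :=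
      fun x => (hκc.integral_hasStrictDerivAt 0 x).hasDerivAt
    exact fun x _ => ((this x).differentiableAt.continuousAt).continuousWithinAt
  obtain ⟨b, hbIcc, hFb⟩ : ∃ b ∈ Set.Icc (0:ℝ) L, (∫ s in (0:ℝ)..b, κ s) = K / 2 := by
    have hsub := intermediate_value_Icc hL.le hFc
    have : K / 2 ∈ Set.Icc (∫ s in (0:ℝ)..(0:ℝ), κ s) (∫ s in (0:ℝ)..L, κ s) := by
      rw [intervalIntegral.integral_same]
      exact ⟨by linarith, by rw [← hKdef]; linarith⟩
    obtain ⟨b, hb, hb'⟩ := hsub this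
    exact ⟨b, hb, hb'⟩
  -- the bisection argument
  set A := T 0 with hA
  set B := T b with hB
  obtain ⟨s₀, hs₀Icc, hs₀⟩ := hzero (A + B)
  set x := T s₀ with hx
  have hxA : ⟪x, A⟫ + ⟪x, B⟫ = 0 := by
    rw [← inner_add_right]; exact hs₀
  have harc : arccos ⟪A, x⟫ + arccos ⟪x, B⟫ = π := by
    have h1 : ⟪x, B⟫ = -⟪x, A⟫ := by linarith
    have e1 : ⟪A, x⟫ = ⟪x, A⟫ := real_inner_comm _ _
    rw [e1, h1, Real.arccos_neg]
    ring
  have harc' : arccos ⟪B, x⟫ + arccos ⟪x, A⟫ = π := by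
    have h1 : ⟪x, B⟫ = -⟪x, A⟫ := by linarith
    have e1 : ⟪B, x⟫ = ⟪x, B⟫ := real_inner_comm _ _
    rw [e1, h1, Real.arccos_neg]
    ring
  have hint : ∀ u v : ℝ, IntervalIntegrable κ MeasureTheory.volume u v :=
    fun u v => hκc.intervalIntegrable u v
  -- in both cases, π ≤ K / 2
  have hhalf : π ≤ K / 2 := by
    rcases le_total s₀ b with hcase | hcase
    · have h1 : arccos ⟪T 0, T s₀⟫ ≤ ∫ s in (0:ℝ)..s₀, κ s :=
        arccos_le_integral T hTd hT'c hunit hs₀Icc.1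
      have h2 : arccos ⟪T s₀, T b⟫ ≤ ∫ s in s₀..b, κ s :=
        arccos_le_integral T hTd hT'c hunit hcase
      have hadd : (∫ s in (0:ℝ)..s₀, κ s) + ∫ s in s₀..b, κ s = K / 2 := by
        rw [intervalIntegral.integral_add_adjacent_intervals (hint 0 s₀) (hint s₀ b), hFb]
      calc π = arccos ⟪A, x⟫ + arccos ⟪x, B⟫ := harc.symm
        _ ≤ (∫ s in (0:ℝ)..s₀, κ s) + ∫ s in s₀..b, κ s := add_le_add h1 h2
        _ = K / 2 := hadd
    · have h1 : arccos ⟪T b, T s₀⟫ ≤ ∫ s in b..s₀, κ s :=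
        arccos_le_integral T hTd hT'c hunit hcase
      have h2 : arccos ⟪T s₀, T L⟫ ≤ ∫ s in s₀..L, κ s :=
        arccos_le_integral T hTd hT'c hunit hs₀Icc.2
      have hadd : (∫ s in b..s₀, κ s) + ∫ s in s₀..L, κ s = K / 2 := by
        have h3 : (∫ s in (0:ℝ)..b, κ s) + ∫ s in b..L, κ s = K :=
          intervalIntegral.integral_add_adjacent_intervals (hint 0 b) (hint b L)
        have h4 : (∫ s in b..s₀, κ s) + ∫ s in s₀..L, κ s = ∫ s in b..L, κ s :=
          intervalIntegral.integral_add_adjacent_intervals (hint b s₀) (hint s₀ L)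
        rw [hFb] at h3
        linarith
      have hTLx : arccos ⟪T s₀, T L⟫ = arccos ⟪x, A⟫ := by rw [hTL]
      calc π = arccos ⟪B, x⟫ + arccos ⟪x, A⟫ := harc'.symm
        _ ≤ (∫ s in b..s₀, κ s) + ∫ s in s₀..L, κ s := by
            rw [← hTLx]; exact add_le_add h1 h2
        _ = K / 2 := hadd
  linarith
end

section
/- Let V, W be finite-dimensional real inner product spaces with dim V = n ≥ 3, let h : V × V → W be symmetric bilinear, and let c ∈ ℝ. Fix an orthonormal basis e₁,…,e_n of V and define sectional curvatures by the Gauss equation K(eᵢ,eⱼ) = c + ⟨h(eᵢ,eᵢ), h(eⱼ,eⱼ)⟩ − ‖h(eᵢ,eⱼ)‖², the scalar curvature ρ = Σ_{i≠j} K(eᵢ,eⱼ), and the mean curvature vector H = (1/n) Σᵢ h(eᵢ,eᵢ). Then ρ/2 − K(e₁,e₂) ≤ (n²(n−2)/(2(n−1))) ‖H‖² + ((n+1)(n−2)/2) c. -/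
open scoped InnerProductSpace

private lemma chen_sum_split {M : Type*} [AddCommMonoid M] {n : ℕ} {i0 i1 : Fin n}
    (hne : i0 ≠ i1) (g : Fin n → M) :
    ∑ i, g i = g i0 + g i1 + ∑ i ∈ (Finset.univ.erase i1).erase i0, g i := by
  have m0 : i0 ∈ Finset.univ.erase i1 := Finset.mem_erase.2 ⟨hne, Finset.mem_univ _⟩
  have h1 := Finset.sum_erase_add (Finset.univ.erase i1) g m0
  have h2 := Finset.sum_erase_add Finset.univ g (Finset.mem_univ i1)
  rw [← h2, ← h1]
  abel

/-- Pointwise algebraic form of B.-Y. Chen's fundamental inequality: with sectional curvatures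
`K(i,j)` given by the Gauss equation, scalar curvature `ρ = ∑_{i≠j} K(i,j)` and mean curvature
vector `H`, one has `ρ/2 - K(e₁,e₂) ≤ (n²(n-2)/(2(n-1)))‖H‖² + ((n+1)(n-2)/2)c`. -/
theorem stmt_14 {V W : Type*} [NormedAddCommGroup V] [InnerProductSpace ℝ V]
    [NormedAddCommGroup W] [InnerProductSpace ℝ W]
    [FiniteDimensional ℝ V] [FiniteDimensional ℝ W]
    {n : ℕ} (hn : 3 ≤ n) (e : OrthonormalBasis (Fin n) ℝ V)
    (h : V →ₗ[ℝ] V →ₗ[ℝ] W) (hsymm : ∀ x y : V, h x y = h y x)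
    (c : ℝ) (K : Fin n → Fin n → ℝ)
    (hK : ∀ i j : Fin n,
      K i j = c + ⟪h (e i) (e i), h (e j) (e j)⟫_ℝ - ‖h (e i) (e j)‖ ^ 2)
    (ρ : ℝ) (hρ : ρ = ∑ i, ∑ j ∈ Finset.univ.erase i, K i j)
    (H : W) (hH : H = (n : ℝ)⁻¹ • ∑ i, h (e i) (e i)) :
    ρ / 2 - K ⟨0, by omega⟩ ⟨1, by omega⟩
      ≤ ((n : ℝ) ^ 2 * ((n : ℝ) - 2) / (2 * ((n : ℝ) - 1))) * ‖H‖ ^ 2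
        + (((n : ℝ) + 1) * ((n : ℝ) - 2) / 2) * c := by
  have hN3 : (3 : ℝ) ≤ (n : ℝ) := by exact_mod_cast hn
  have hNpos : (0 : ℝ) < (n : ℝ) := by linarith
  have hN1 : (0 : ℝ) < (n : ℝ) - 1 := by linarith
  set i0 : Fin n := ⟨0, by omega⟩ with hi0
  set i1 : Fin n := ⟨1, by omega⟩ with hi1
  have hne : i0 ≠ i1 := by simp [hi0, hi1, Fin.ext_iff]
  set S : W := ∑ i, h (e i) (e i) with hSdef
  set T : ℝ := ∑ i : Fin n, ∑ j : Fin n, ‖h (e i) (e j)‖ ^ 2 with hTdef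
  -- norm of S squared
  have hSsq : ‖S‖ ^ 2 = ∑ i : Fin n, ∑ j : Fin n, ⟪h (e i) (e i), h (e j) (e j)⟫_ℝ := by
    rw [← real_inner_self_eq_norm_sq, hSdef, sum_inner]
    exact Finset.sum_congr rfl fun i _ => inner_sum _ _ _
  -- scalar curvature identity
  have hρ2 : ρ = (n : ℝ) * ((n : ℝ) - 1) * c + ‖S‖ ^ 2 - T := by
    rw [hρ, hSsq, hTdef]
    have hterm : ∀ i : Fin n, ∑ j ∈ Finset.univ.erase i, K i j
        = ((n : ℝ) - 1) * c + ((∑ j : Fin n, ⟪h (e i) (e i), h (e j) (e j)⟫_ℝ)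
            - (∑ j : Fin n, ‖h (e i) (e j)‖ ^ 2)) := by
      intro i
      have h1 : ∑ j ∈ Finset.univ.erase i, K i j
          = ∑ j ∈ Finset.univ.erase i,
              (c + ⟪h (e i) (e i), h (e j) (e j)⟫_ℝ - ‖h (e i) (e j)‖ ^ 2) :=
        Finset.sum_congr rfl fun j _ => hK i j
      have hself : ⟪h (e i) (e i), h (e i) (e i)⟫_ℝ = ‖h (e i) (e i)‖ ^ 2 :=
        real_inner_self_eq_norm_sq _
      have h3 := Finset.sum_erase_eq_sub
        (f := fun j => ⟪h (e i) (e i), h (e j) (e j)⟫_ℝ) (Finset.mem_univ i)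
      have h4 := Finset.sum_erase_eq_sub
        (f := fun j => ‖h (e i) (e j)‖ ^ 2) (Finset.mem_univ i)
      have hcard : ((Finset.univ.erase i).card : ℝ) = (n : ℝ) - 1 := by
        rw [Finset.card_erase_of_mem (Finset.mem_univ i)]
        simp only [Finset.card_univ, Fintype.card_fin]
        have h1n : 1 ≤ n := by omega
        push_cast [Nat.cast_sub h1n]
        ring
      rw [h1, Finset.sum_sub_distrib, Finset.sum_add_distrib, Finset.sum_const,
        nsmul_eq_mul, hcard, h3, h4]
      beta_reduce
      rw [hself]
      ring
    rw [Finset.sum_congr rfl fun i _ => hterm i]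
    rw [Finset.sum_add_distrib, Finset.sum_sub_distrib, Finset.sum_const, nsmul_eq_mul,
      Finset.card_univ, Fintype.card_fin]
    ring
  -- mean curvature
  have hHsq : ‖H‖ ^ 2 = ‖S‖ ^ 2 / (n : ℝ) ^ 2 := by
    rw [hH, norm_smul, Real.norm_eq_abs, abs_of_nonneg (by positivity), mul_pow]
    field_simp
  -- key Cauchy–Schwarz step
  have hkey : ‖S‖ ^ 2 ≤ ((n : ℝ) - 1) *
      (T + 2 * ⟪h (e i0) (e i0), h (e i1) (e i1)⟫_ℝ - 2 * ‖h (e i0) (e i1)‖ ^ 2) := by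
    set f : Fin n → W := fun i =>
      if i = i0 then h (e i0) (e i0) + h (e i1) (e i1)
      else if i = i1 then 0 else h (e i) (e i) with hf
    have hfi0 : f i0 = h (e i0) (e i0) + h (e i1) (e i1) := by simp [hf]
    have hfi1 : f i1 = 0 := by simp [hf, hne.symm]
    have hrest : ∀ i ∈ (Finset.univ.erase i1).erase i0, f i = h (e i) (e i) := by
      intro i hi
      have hiA : i ≠ i0 := (Finset.mem_erase.1 hi).1
      have hiB : i ≠ i1 := (Finset.mem_erase.1 (Finset.mem_erase.1 hi).2).1
      simp [hf, hiA, hiB]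
    have hSf : S = ∑ i ∈ Finset.univ.erase i1, f i := by
      rw [Finset.sum_erase_eq_sub (f := f) (s := Finset.univ) (Finset.mem_univ i1),
        chen_sum_split hne f, hfi0, hfi1, Finset.sum_congr rfl hrest, hSdef,
        chen_sum_split hne (fun i => h (e i) (e i))]
      abel
    have hcard : ((Finset.univ.erase i1).card : ℝ) = (n : ℝ) - 1 := by
      rw [Finset.card_erase_of_mem (Finset.mem_univ i1)]
      simp only [Finset.card_univ, Fintype.card_fin]
      have h1n : 1 ≤ n := by omega
      push_cast [Nat.cast_sub h1n]
      ring
    -- Cauchy-Schwarz: ‖S‖² ≤ (n-1) ∑ ‖f i‖²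
    have hcs : ‖S‖ ^ 2 ≤ ((n : ℝ) - 1) * ∑ i ∈ Finset.univ.erase i1, ‖f i‖ ^ 2 := by
      have h1 : ‖S‖ ≤ ∑ i ∈ Finset.univ.erase i1, ‖f i‖ := by
        rw [hSf]; exact norm_sum_le _ _
      have h2 : ‖S‖ ^ 2 ≤ (∑ i ∈ Finset.univ.erase i1, ‖f i‖) ^ 2 :=
        pow_le_pow_left₀ (norm_nonneg _) h1 2
      have h3 := sq_sum_le_card_mul_sum_sq (s := Finset.univ.erase i1)
        (f := fun i => ‖f i‖)
      calc ‖S‖ ^ 2 ≤ (∑ i ∈ Finset.univ.erase i1, ‖f i‖) ^ 2 := h2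
        _ ≤ ((Finset.univ.erase i1).card : ℝ) * ∑ i ∈ Finset.univ.erase i1, ‖f i‖ ^ 2 := h3
        _ = ((n : ℝ) - 1) * ∑ i ∈ Finset.univ.erase i1, ‖f i‖ ^ 2 := by rw [hcard]
    -- compute ∑ ‖f i‖²
    have hsum : ∑ i ∈ Finset.univ.erase i1, ‖f i‖ ^ 2
        = (∑ i : Fin n, ‖h (e i) (e i)‖ ^ 2)
          + 2 * ⟪h (e i0) (e i0), h (e i1) (e i1)⟫_ℝ := by
      have h2 := Finset.sum_erase_eq_sub (f := fun i => ‖f i‖ ^ 2)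
        (s := Finset.univ) (Finset.mem_univ i1)
      have hfn0 : ‖f i0‖ ^ 2 = ‖h (e i0) (e i0)‖ ^ 2 + ‖h (e i1) (e i1)‖ ^ 2
          + 2 * ⟪h (e i0) (e i0), h (e i1) (e i1)⟫_ℝ := by
        rw [hfi0, norm_add_sq_real]; ring
      rw [h2, chen_sum_split hne (fun i => ‖f i‖ ^ 2),
        chen_sum_split hne (fun i => ‖h (e i) (e i)‖ ^ 2),
        Finset.sum_congr rfl (fun i hi => by rw [hrest i hi]),
        hfn0, hfi1]
      simp [hfi1]
      ring
    -- T bounds diagonal plus the (i0,i1) off-diagonal terms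
    have hT2 : (∑ i : Fin n, ‖h (e i) (e i)‖ ^ 2) + 2 * ‖h (e i0) (e i1)‖ ^ 2 ≤ T := by
      have hdiag : T - (∑ i : Fin n, ‖h (e i) (e i)‖ ^ 2)
          = ∑ i : Fin n, ∑ j ∈ Finset.univ.erase i, ‖h (e i) (e j)‖ ^ 2 := by
        rw [hTdef, ← Finset.sum_sub_distrib]
        refine Finset.sum_congr rfl fun i _ => ?_
        rw [Finset.sum_erase_eq_sub (f := fun j => ‖h (e i) (e j)‖ ^ 2)
          (Finset.mem_univ i)]
      have hg0 : ‖h (e i0) (e i1)‖ ^ 2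
          ≤ ∑ j ∈ Finset.univ.erase i0, ‖h (e i0) (e j)‖ ^ 2 :=
        Finset.single_le_sum (f := fun j => ‖h (e i0) (e j)‖ ^ 2)
          (fun j _ => by positivity)
          (Finset.mem_erase.2 ⟨hne.symm, Finset.mem_univ _⟩)
      have hg1 : ‖h (e i0) (e i1)‖ ^ 2
          ≤ ∑ j ∈ Finset.univ.erase i1, ‖h (e i1) (e j)‖ ^ 2 := by
        have h5 : ‖h (e i1) (e i0)‖ ^ 2
            ≤ ∑ j ∈ Finset.univ.erase i1, ‖h (e i1) (e j)‖ ^ 2 :=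
          Finset.single_le_sum (f := fun j => ‖h (e i1) (e j)‖ ^ 2)
            (fun j _ => by positivity)
            (Finset.mem_erase.2 ⟨hne, Finset.mem_univ _⟩)
        rwa [hsymm (e i1) (e i0)] at h5
      have hrest2 : (0 : ℝ) ≤ ∑ i ∈ (Finset.univ.erase i1).erase i0,
          ∑ j ∈ Finset.univ.erase i, ‖h (e i) (e j)‖ ^ 2 :=
        Finset.sum_nonneg fun i _ => Finset.sum_nonneg fun j _ => by positivity
      rw [chen_sum_split hne
        (fun i => ∑ j ∈ Finset.univ.erase i, ‖h (e i) (e j)‖ ^ 2)] at hdiag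
      linarith
    calc ‖S‖ ^ 2 ≤ ((n : ℝ) - 1) * ∑ i ∈ Finset.univ.erase i1, ‖f i‖ ^ 2 := hcs
      _ = ((n : ℝ) - 1) * ((∑ i : Fin n, ‖h (e i) (e i)‖ ^ 2)
            + 2 * ⟪h (e i0) (e i0), h (e i1) (e i1)⟫_ℝ) := by rw [hsum]
      _ ≤ ((n : ℝ) - 1) *
          (T + 2 * ⟪h (e i0) (e i0), h (e i1) (e i1)⟫_ℝ - 2 * ‖h (e i0) (e i1)‖ ^ 2) := by
        apply mul_le_mul_of_nonneg_left _ (le_of_lt hN1)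
        linarith
  -- final arithmetic
  rw [hρ2, hK i0 i1, hHsq]
  set P : ℝ := ⟪h (e i0) (e i0), h (e i1) (e i1)⟫_ℝ
  set Q : ℝ := ‖h (e i0) (e i1)‖ ^ 2
  set x : ℝ := ‖S‖ ^ 2
  have hdiv : (n : ℝ) ^ 2 * ((n : ℝ) - 2) / (2 * ((n : ℝ) - 1)) * (x / (n : ℝ) ^ 2)
      = ((n : ℝ) - 2) * x / (2 * ((n : ℝ) - 1)) := by
    field_simp
  rw [hdiv]
  have hlhs : ((n : ℝ) * ((n : ℝ) - 1) * c + x - T) / 2 - (c + P - Q)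
      = (x / 2 - T / 2 - P + Q) + ((n : ℝ) + 1) * ((n : ℝ) - 2) / 2 * c := by ring
  rw [hlhs]
  apply add_le_add_left
  rw [le_div_iff₀ (by positivity : (0 : ℝ) < 2 * ((n : ℝ) - 1))]
  nlinarith [hkey]
end
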